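/- arXiv:1412.3962 — 3 statements merged into one kernel-verified Lean document; each statement's English description precedes it below -/
import Mathlib

section
/- A monomial ideal I in S = k[x_1,...,x_n] is of Borel type (i.e., I : (x_1,...,x_i)^∞ = I : x_i^∞ for all i) if and only if the truncated ideal I_{≥e} (the ideal generated by all monomials of degree at least e belonging to I) is stable for all sufficiently large e. -/
open MvPolynomial DirectSum

noncomputable section




variable {k : Type} [Field k] {n : ℕ}

/-- The maximal graded ideal `(x_1, …, x_n)` of `k[x_1,…,x_n]`. -/
def maxIdeal (k : Type) [Field k] (n : ℕ) : Ideal (MvPolynomial (Fin n) k) :=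
  Ideal.span (Set.range X)

/-- The "infinite colon" `I : J^∞ = ⋃_t (I : J^t)`. -/
def infColon (I J : Ideal (MvPolynomial (Fin n) k)) : Ideal (MvPolynomial (Fin n) k) :=
  ⨆ t : ℕ, Submodule.colon I ((J ^ t : Ideal (MvPolynomial (Fin n) k)) : Set (MvPolynomial (Fin n) k))

/-- The saturation `I^{sat} = I : m^∞`. -/
def satur (I : Ideal (MvPolynomial (Fin n) k)) : Ideal (MvPolynomial (Fin n) k) :=
  infColon I (maxIdeal k n)

/-- A monomial ideal: an ideal generated by monomials. -/
def IsMonomialIdeal (I : Ideal (MvPolynomial (Fin n) k)) : Prop :=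
  ∃ A : Set (Fin n →₀ ℕ), I = Ideal.span ((fun u => monomial u (1 : k)) '' A)

/-- `I` is of Borel type: `I : (x_1,…,x_i)^∞ = I : x_i^∞` for all `i`. -/
def IsBorelType (I : Ideal (MvPolynomial (Fin n) k)) : Prop :=
  ∀ i : Fin n,
    infColon I (Ideal.span {f | ∃ j ≤ i, f = X j}) = infColon I (Ideal.span {X i})

/-- Total degree of an exponent vector. -/
def expDeg (u : Fin n →₀ ℕ) : ℕ := u.sum fun _ e => e

/-- The truncated ideal `I_{≥ e}`, generated by all monomials of degree `≥ e` lying in `I`. -/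
def truncGE (I : Ideal (MvPolynomial (Fin n) k)) (e : ℕ) : Ideal (MvPolynomial (Fin n) k) :=
  Ideal.span {f | ∃ u : Fin n →₀ ℕ, monomial u (1 : k) ∈ I ∧ e ≤ expDeg u ∧ f = monomial u (1 : k)}

/-- A stable monomial ideal: for every monomial `x^u ∈ I` with largest variable `x_j`
dividing it and every `i < j`, also `x_i x^u / x_j ∈ I`. -/
def IsStable (I : Ideal (MvPolynomial (Fin n) k)) : Prop :=
  ∀ u : Fin n →₀ ℕ, monomial u (1 : k) ∈ I →
    ∀ j : Fin n, j ∈ u.support → (∀ l ∈ u.support, l ≤ j) →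
      ∀ i : Fin n, i < j →
        monomial (u - Finsupp.single j 1 + Finsupp.single i 1) (1 : k) ∈ I

/-- The set of (exponent vectors of) minimal monomial generators of a monomial ideal. -/
def minGens (I : Ideal (MvPolynomial (Fin n) k)) : Set (Fin n →₀ ℕ) :=
  {u | monomial u (1 : k) ∈ I ∧ ∀ v : Fin n →₀ ℕ, monomial v (1 : k) ∈ I → v ≤ u → v = u}

/-- The irreducible monomial ideal `m^b = (x_i^{b_i} : b_i ≥ 1)`. -/
def irredPow (k : Type) [Field k] {n : ℕ} (b : Fin n →₀ ℕ) : Ideal (MvPolynomial (Fin n) k) :=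
  Ideal.span {f | ∃ i : Fin n, 1 ≤ b i ∧ f = (X i : MvPolynomial (Fin n) k) ^ b i}





/-- The product of the variables indexed by `F`. -/
def varProd (k : Type) [Field k] {n : ℕ} (F : Finset (Fin n)) : MvPolynomial (Fin n) k :=
  ∏ i ∈ F, X i

variable (M : Type) [AddCommGroup M] [Module (MvPolynomial (Fin n) k) M]

variable (k) in
/-- The localization of `M` at the product of the variables indexed by `F`. -/
abbrev locAt' (F : Finset (Fin n)) : Type :=
  LocalizedModule (Submonoid.powers (varProd k F)) M

variable (k n) in
/-- The `p`-th term of the Čech complex. -/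
abbrev cechC (p : ℕ) : Type :=
  DirectSum {F : Finset (Fin n) // F.card = p} (fun F => locAt' k M F.1)

lemma commute_aux {A : Type} [Ring A] {a b : A} (h : Commute a b) (hu : IsUnit (a * b)) :
    IsUnit a := by
  refine isUnit_iff_exists.mpr ⟨b * ↑hu.unit⁻¹, ?_, ?_⟩
  · rw [← mul_assoc]
    simpa using hu.unit.mul_inv
  · have hc : Commute a (↑hu.unit : A) := by
      have : (↑hu.unit : A) = a * b := hu.unit_spec
      rw [this]
      exact (Commute.refl a).mul_right h
    have hc' : Commute a (↑hu.unit⁻¹ : A) := hc.units_inv_right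
    calc b * ↑hu.unit⁻¹ * a = b * (a * ↑hu.unit⁻¹) := by rw [mul_assoc, hc'.eq]
    _ = (a * b) * ↑hu.unit⁻¹ := by rw [← mul_assoc]; exact congrArg (· * _) h.eq.symm
    _ = 1 := by simpa using hu.unit.mul_inv

lemma isUnit_algebraMap_end (u v w : MvPolynomial (Fin n) k) (hw : w = u * v)
    (s : Submonoid.powers u) :
    IsUnit ((algebraMap (MvPolynomial (Fin n) k)
      (Module.End (MvPolynomial (Fin n) k)
        (LocalizedModule (Submonoid.powers w) M))) s) := by
  subst hw
  obtain ⟨t, ht⟩ := s.2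
  have h1 : IsUnit ((algebraMap (MvPolynomial (Fin n) k)
      (Module.End (MvPolynomial (Fin n) k)
        (LocalizedModule (Submonoid.powers (u * v)) M))) ((u * v) ^ t)) :=
    IsLocalizedModule.map_units
      (LocalizedModule.mkLinearMap (Submonoid.powers (u * v)) M)
      (⟨(u * v) ^ t, ⟨t, rfl⟩⟩ : Submonoid.powers (u * v))
  have h2 : (u * v) ^ t = (s : MvPolynomial (Fin n) k) * v ^ t := by
    rw [mul_pow]; simp only [ht]
  rw [h2, map_mul] at h1
  exact commute_aux ((Commute.all _ _).map _) h1

/-- The canonical map between localizations of `M` for `F ⊆ G`. -/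
def locMap (F G : Finset (Fin n)) (h : F ⊆ G) :
    locAt' k M F →ₗ[MvPolynomial (Fin n) k] locAt' k M G := by
  refine LocalizedModule.lift _
    (LocalizedModule.mkLinearMap (Submonoid.powers (varProd k G)) M) ?_
  intro s
  have hFG : varProd k G = varProd k F * varProd k (G \ F) := by
    rw [varProd, varProd, varProd, ← Finset.prod_sdiff h, mul_comm]
  exact isUnit_algebraMap_end M _ _ _ hFG s

set_option maxHeartbeats 1000000 in
variable (k n) in
/-- The Čech differential. -/
def cechD (p : ℕ) : cechC k n M p →ₗ[MvPolynomial (Fin n) k] cechC k n M (p + 1) :=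
  DirectSum.toModule (MvPolynomial (Fin n) k) _ (cechC k n M (p + 1)) (fun F =>
    ∑ j : Fin n,
      if h : j ∈ F.1 then 0 else
        ((-1 : ℤ) ^ ((F.1.filter (· < j)).card)) •
          ((DirectSum.lof (MvPolynomial (Fin n) k) {G : Finset (Fin n) // G.card = p + 1}
              (fun G => locAt' k M G.1)
              ⟨insert j F.1, by rw [Finset.card_insert_of_notMem h, F.2]⟩).comp
            (locMap M F.1 (insert j F.1) (Finset.subset_insert _ _))))


variable (k n) in
/-- The cocycles at Čech degree `p`, as an additive subgroup. -/
def cechZ (p : ℕ) : AddSubgroup (cechC k n M p) :=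
  AddMonoidHom.ker (cechD k n M p).toAddMonoidHom

variable (k n) in
/-- The coboundaries at Čech degree `p`, as an additive subgroup. -/
def cechB (p : ℕ) : AddSubgroup (cechC k n M p) :=
  Nat.casesOn (motive := fun p => AddSubgroup (cechC k n M p)) p ⊥
    (fun q => AddMonoidHom.range (G := cechC k n M q) (N := cechC k n M (q + 1))
      ((cechD k n M q).toAddMonoidHom))

variable (k n) in
/-- The `p`-th (Čech) local cohomology of `M` with respect to the maximal graded
ideal: cocycles modulo coboundaries. -/
abbrev cechH (p : ℕ) : Type :=
  (cechZ k n M p) ⧸ ((cechB k n M p).addSubgroupOf (cechZ k n M p))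

variable (dg : ℤ → AddSubgroup M)

/-- The degree-`j` part of the localization of `M` at `x_F`, induced by a grading `dg`
of `M`: it is generated by the fractions `m / x_F^t` with `m` homogeneous of degree
`j + t·|F|`. -/
def locDeg (F : Finset (Fin n)) (j : ℤ) : AddSubgroup (locAt' k M F) :=
  AddSubgroup.closure
    {z | ∃ (t : ℕ) (m : M), m ∈ dg (j + t * F.card) ∧
      z = LocalizedModule.mk m (⟨varProd k F ^ t, ⟨t, rfl⟩⟩ : Submonoid.powers (varProd k F))}

variable (k n) in
/-- The degree-`j` part of the `p`-th Čech term. -/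
def cechDeg (p : ℕ) (j : ℤ) : AddSubgroup (cechC k n M p) where
  carrier := {x | ∀ F, x F ∈ locDeg M dg F.1 j}
  zero_mem' := by intro F; rw [DirectSum.zero_apply]; exact zero_mem _
  add_mem' := by intro a b ha hb F; rw [DirectSum.add_apply]; exact add_mem (ha F) (hb F)
  neg_mem' := by intro a ha F; rw [DFinsupp.neg_apply]; exact neg_mem (ha F)

variable (k n) in
/-- The degree-`j` part of the `p`-th local cohomology of `M`. -/
def cechHdeg (p : ℕ) (j : ℤ) : AddSubgroup (cechH k n M p) :=
  AddSubgroup.map (QuotientAddGroup.mk' ((cechB k n M p).addSubgroupOf (cechZ k n M p)))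
    ((cechDeg k n M dg p j).comap (cechZ k n M p).subtype)

variable (k n) in
/-- `a_i(M) = max{ j : H_m^i(M)_j ≠ 0 }`, as an extended real (`⊥ = -∞` if the
local cohomology vanishes). -/
def aInv (i : ℕ) : EReal :=
  sSup {x : EReal | ∃ j : ℤ, cechHdeg k n M dg i j ≠ ⊥ ∧ x = ((j : ℝ) : EReal)}

variable (k n) in
/-- The partial regularity `reg_t(M) = max{ a_i(M) + i : i ≤ t }`. -/
def regT (t : ℕ) : EReal :=
  sSup {x : EReal | ∃ i ≤ t, x = aInv k n M dg i + ((i : ℝ) : EReal)}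

variable (k n) in
/-- `a*_t(M) = max{ a_i(M) : i ≤ t }`. -/
def aStarT (t : ℕ) : EReal :=
  sSup {x : EReal | ∃ i ≤ t, x = aInv k n M dg i}

variable (k n) in
/-- The Castelnuovo–Mumford regularity `reg M = max_i { a_i(M) + i }`. -/
def cmReg : EReal :=
  sSup {x : EReal | ∃ i : ℕ, x = aInv k n M dg i + ((i : ℝ) : EReal)}

variable (k n) in
/-- The `a^*`-invariant `a^*(M) = max_i a_i(M)`. -/
def aStar : EReal :=
  sSup {x : EReal | ∃ i : ℕ, x = aInv k n M dg i}

/-- The canonical grading of a quotient `S/I` by a homogeneous ideal. -/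
def quotDeg (I : Ideal (MvPolynomial (Fin n) k)) (j : ℤ) :
    AddSubgroup ((MvPolynomial (Fin n) k) ⧸ I) :=
  if 0 ≤ j then
    AddSubgroup.map (Ideal.Quotient.mk I).toAddMonoidHom
      ((homogeneousSubmodule (Fin n) k j.toNat).toAddSubgroup)
  else ⊥

/-- The canonical grading of a homogeneous ideal `I ⊆ S`, viewed as an `S`-module. -/
def idealDeg (I : Ideal (MvPolynomial (Fin n) k)) (j : ℤ) : AddSubgroup I :=
  if 0 ≤ j then
    AddSubgroup.comap (Submodule.subtype I).toAddMonoidHom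
      ((homogeneousSubmodule (Fin n) k j.toNat).toAddSubgroup)
  else ⊥

variable (k n) in
/-- `a_i(S/I)` for a homogeneous ideal `I`. -/
def aQuot (I : Ideal (MvPolynomial (Fin n) k)) (i : ℕ) : EReal :=
  aInv k n ((MvPolynomial (Fin n) k) ⧸ I) (quotDeg I) i

variable (k n) in
/-- `a_i(I)` for a homogeneous ideal `I` viewed as a graded `S`-module. -/
def aIdealMod (I : Ideal (MvPolynomial (Fin n) k)) (i : ℕ) : EReal :=
  aInv k n I (idealDeg I) i


variable (k n) in
/-- `reg_t(S/I)` for a homogeneous ideal `I`. -/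
def regTQuot (I : Ideal (MvPolynomial (Fin n) k)) (t : ℕ) : EReal :=
  regT k n ((MvPolynomial (Fin n) k) ⧸ I) (quotDeg I) t

variable (k n) in
/-- `a*_t(S/I)` for a homogeneous ideal `I`. -/
def aStarTQuot (I : Ideal (MvPolynomial (Fin n) k)) (t : ℕ) : EReal :=
  aStarT k n ((MvPolynomial (Fin n) k) ⧸ I) (quotDeg I) t

variable (k n) in
/-- `reg(S/I)` for a homogeneous ideal `I`. -/
def cmRegQuot (I : Ideal (MvPolynomial (Fin n) k)) : EReal :=
  cmReg k n ((MvPolynomial (Fin n) k) ⧸ I) (quotDeg I)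

variable (k n) in
/-- `a^*(S/I)` for a homogeneous ideal `I`. -/
def aStarQuot (I : Ideal (MvPolynomial (Fin n) k)) : EReal :=
  aStar k n ((MvPolynomial (Fin n) k) ⧸ I) (quotDeg I)

variable (k n) in
/-- `reg_t(I)` for a homogeneous ideal `I` viewed as a graded module. -/
def regTIdeal (I : Ideal (MvPolynomial (Fin n) k)) (t : ℕ) : EReal :=
  regT k n I (idealDeg I) t

variable (k n) in
/-- `a*_t(I)` for a homogeneous ideal `I` viewed as a graded module. -/
def aStarTIdeal (I : Ideal (MvPolynomial (Fin n) k)) (t : ℕ) : EReal :=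
  aStarT k n I (idealDeg I) t

variable (k n) in
/-- `reg(I)`, the Castelnuovo–Mumford regularity of the ideal `I` as a graded module. -/
def cmRegIdeal (I : Ideal (MvPolynomial (Fin n) k)) : EReal :=
  cmReg k n I (idealDeg I)

variable (k n) in
/-- The depth of a module: the maximal length of a regular sequence contained in the
maximal graded ideal. -/
def moduleDepth (N : Type) [AddCommGroup N] [Module (MvPolynomial (Fin n) k) N] : ℕ :=
  sSup {d : ℕ | ∃ rs : List (MvPolynomial (Fin n) k), rs.length = d ∧
    (∀ r ∈ rs, r ∈ maxIdeal k n) ∧ RingTheory.Sequence.IsRegular N rs}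

variable (k n) in
/-- The (Krull) dimension of a module, i.e. of `S` modulo its annihilator. -/
def moduleDim (N : Type) [AddCommGroup N] [Module (MvPolynomial (Fin n) k) N] :
    WithBot ℕ∞ :=
  ringKrullDim ((MvPolynomial (Fin n) k) ⧸ Module.annihilator (MvPolynomial (Fin n) k) N)

variable (k n) in
/-- A Cohen–Macaulay module: zero, or of depth equal to its dimension. -/
def IsCMmod (N : Type) [AddCommGroup N] [Module (MvPolynomial (Fin n) k) N] : Prop :=
  Subsingleton N ∨ ((moduleDepth k n N : ℕ∞) : WithBot ℕ∞) = moduleDim k n N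

/-- The satiety `s(I^{sat}/I)`: the largest degree `j` with `(I^{sat}/I)_j ≠ 0`,
i.e. with `(I^{sat})_j ⊄ I_j`, as an extended real. -/
def satietyDeg {k : Type} [Field k] {n : ℕ} (I : Ideal (MvPolynomial (Fin n) k)) : EReal :=
  sSup {x : EReal | ∃ j : ℕ,
    (∃ f ∈ homogeneousSubmodule (Fin n) k j, f ∈ satur I ∧ f ∉ I) ∧ x = ((j : ℝ) : EReal)}

/-- Maximal degree of a minimal monomial generator. -/
def genDeg {k : Type} [Field k] {n : ℕ} (I : Ideal (MvPolynomial (Fin n) k)) : ℕ :=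
  sSup {d : ℕ | ∃ u ∈ minGens I, expDeg u = d}

/-- `m(u)`: the (1-based) largest index of a variable dividing the monomial `x^u`. -/
def mVal {n : ℕ} (u : Fin n →₀ ℕ) : ℕ :=
  u.support.sup (fun i => (i : ℕ) + 1)

variable (k n) in
/-- The degree-`t` part of a graded free module `⊕_j S(-d_j)`, realized as
`Fin r →₀ S`: the `j`-th coordinate must be homogeneous of degree `t - d j`. -/
def freeDeg (r : ℕ) (d : Fin r → ℤ) (t : ℤ) :
    AddSubgroup (Fin r →₀ MvPolynomial (Fin n) k) where
  carrier := {f | ∀ j : Fin r,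
    (0 ≤ t - d j → f j ∈ homogeneousSubmodule (Fin n) k (t - d j).toNat) ∧
    (t - d j < 0 → f j = 0)}
  zero_mem' := by
    intro j
    exact ⟨fun _ => by simp, fun _ => by simp⟩
  add_mem' := by
    intro a b ha hb j
    refine ⟨fun h => ?_, fun h => ?_⟩
    · simpa [Finsupp.add_apply] using add_mem ((ha j).1 h) ((hb j).1 h)
    · simp [Finsupp.add_apply, (ha j).2 h, (hb j).2 h]
  neg_mem' := by
    intro a ha j
    refine ⟨fun h => ?_, fun h => ?_⟩
    · simpa [Finsupp.neg_apply] using neg_mem ((ha j).1 h)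
    · simp [Finsupp.neg_apply, (ha j).2 h]

/-- A minimal graded free resolution
`0 → F_s → ⋯ → F_1 → F_0 → M → 0` of a graded module `M` (with grading `dg`),
where `F_i` is free with `rk i` generators of degrees `dgen i j`. -/
structure MinimalGradedFreeRes (dg : ℤ → AddSubgroup M) where
  /-- length of the resolution -/
  s : ℕ
  /-- ranks of the free modules -/
  rk : ℕ → ℕ
  /-- degrees of the generators -/
  dgen : (i : ℕ) → Fin (rk i) → ℤ
  /-- the differentials `F_{i+1} → F_i` -/
  φ : (i : ℕ) → (Fin (rk (i + 1)) →₀ MvPolynomial (Fin n) k) →ₗ[MvPolynomial (Fin n) k]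
      (Fin (rk i) →₀ MvPolynomial (Fin n) k)
  /-- the augmentation `F_0 → M` -/
  ε : (Fin (rk 0) →₀ MvPolynomial (Fin n) k) →ₗ[MvPolynomial (Fin n) k] M
  rk_eq_zero : ∀ i, s < i → rk i = 0
  ε_surj : Function.Surjective ε
  ε_graded : ∀ (t : ℤ) x, x ∈ freeDeg k n (rk 0) (dgen 0) t → ε x ∈ dg t
  φ_graded : ∀ (i : ℕ) (t : ℤ) x, x ∈ freeDeg k n (rk (i + 1)) (dgen (i + 1)) t →
    φ i x ∈ freeDeg k n (rk i) (dgen i) t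
  exact_aug : LinearMap.ker ε = LinearMap.range (φ 0)
  exact_mid : ∀ i : ℕ, LinearMap.ker (φ i) = LinearMap.range (φ (i + 1))
  minimal : ∀ (i : ℕ) x (j : Fin (rk i)), (φ i x) j ∈ maxIdeal k n


/-!
Write `u_{<j}` for the part `u.filter (· < j)` of an exponent vector below the variable `x_j`.

If `I` is of Borel type and `x^u ∈ I`, then `x^{u_{<j}} ∈ I : (x_l : l < j)^∞`: strip off the
variables `x_a`, `a ≥ j`, one at a time, using `I : x_a^∞ = I : (x_1, …, x_a)^∞` to trade a power
of `x_a` for powers of the smaller variables. By Dickson's lemma finitely many monomials of `I`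
divide all others, so one exponent `S` works for all of them, and `I_{≥e}` is stable as soon as
`e ≥ S + max deg`: if `x^u ∣ x^v` uses all of the last variable `x_j` of `x^v`, then the part of
`x_i x^v / x_j` below `x_j` is `x^{u_{<j}}` times a monomial of degree at least `S`.

Conversely, if `I_{≥e}` is stable, moving exponents from the last variable downwards shows
`x^{z_{<c}} (x_1, …, x_c)^{|z_{≥c}|} ⊆ I_{≥e}` whenever `x^z ∈ I_{≥e}`. If `f x_i^t ∈ I`, every
monomial `x^v` of `f` has `x^v x_i^{t+e} ∈ I_{≥e}` (as `I` is monomial), hence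
`x^v ∈ I : (x_1, …, x_i)^∞`.
-/

namespace Finsupp

variable {α β : Type*}

theorem filter_le [AddCommMonoid β] [PartialOrder β] [CanonicallyOrderedAdd β]
    (p : α → Prop) [DecidablePred p] (f : α →₀ β) : f.filter p ≤ f := fun a => by
  by_cases h : p a <;> simp [h]

theorem filter_mem_supported [AddCommMonoid β] (R : Type*) [Semiring R] [Module R β]
    (p : α → Prop) [DecidablePred p] (f : α →₀ β) :
    f.filter p ∈ supported β R {a | p a} :=
  fun _ ha => (Finset.mem_filter.1 ha).2

theorem mem_supported_of_le [AddCommMonoid β] [PartialOrder β] [CanonicallyOrderedAdd β]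
    {R : Type*} [Semiring R] [Module R β] {s : Set α} {f g : α →₀ β} (hfg : f ≤ g)
    (hg : g ∈ supported β R s) : f ∈ supported β R s :=
  (Finset.coe_subset.2 (support_mono hfg)).trans ((mem_supported _ _).1 hg)

theorem apply_le_of_le_add_single {u w : α →₀ ℕ} {j l : α} (h : u ≤ w + single j 1)
    (hl : l ≠ j) : u l ≤ w l := by
  classical
  simpa [single_apply, hl.symm] using h l

theorem single_add_mem_supported_iff [AddCommMonoid β] {R : Type*} [Semiring R] [Module R β]
    {s : Set α} {a : α} {b : β} {f : α →₀ β} (ha : a ∉ f.support) (hb : b ≠ 0) :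
    single a b + f ∈ supported β R s ↔ a ∈ s ∧ f ∈ supported β R s := by
  simp [mem_supported, support_single_add ha hb, Set.insert_subset_iff]

theorem degree_filter_lt_add_apply [LinearOrder α] {z : α →₀ ℕ} {j : α}
    (hz : z ∈ supported ℕ ℕ (Set.Iic j)) : (z.filter (· < j)).degree + z j = z.degree := by
  have hge : z.filter (¬ · < j) = single j (z j) := by
    ext l
    rcases lt_trichotomy l j with hl | rfl | hl
    · simp [hl, hl.ne]
    · simp
    · rw [filter_apply, if_pos (not_lt.2 hl.le), single_apply, if_neg hl.ne,
        (mem_supported' _ _).1 hz l (not_le.2 hl)]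
  conv_rhs => rw [← filter_add_filter_not z (· < j), map_add, hge, degree_single]

end Finsupp

theorem WellQuasiOrderedLE.exists_finset_forall_exists_le {α : Type*} [PartialOrder α]
    [WellQuasiOrderedLE α] (P : α → Prop) :
    ∃ A : Finset α, (∀ u ∈ A, P u) ∧ ∀ v, P v → ∃ u ∈ A, u ≤ v := by
  have hfin := WellQuasiOrderedLE.finite_of_isAntichain (setOfPred_minimal_antichain P)
  refine ⟨hfin.toFinset, fun u hu => (hfin.mem_toFinset.1 hu).prop, fun v hv => ?_⟩
  obtain ⟨u, huv, hu⟩ := exists_minimal_le_of_wellFoundedLT P v hv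
  exact ⟨u, hfin.mem_toFinset.2 hu, huv⟩

namespace MvPolynomial

variable {σ R : Type*} [CommSemiring R]

theorem monomial_mem_of_le {I : Ideal (MvPolynomial σ R)} {u v : σ →₀ ℕ}
    (hu : monomial u (1 : R) ∈ I) (huv : u ≤ v) : monomial v (1 : R) ∈ I := by
  obtain ⟨c, rfl⟩ := exists_add_of_le huv
  simpa [monomial_mul, add_comm] using I.mul_mem_left (monomial c 1) hu

theorem mem_of_forall_monomial_mem (I : Ideal (MvPolynomial σ R)) {f : MvPolynomial σ R}
    (h : ∀ v ∈ f.support, monomial v (1 : R) ∈ I) : f ∈ I := by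
  rw [f.as_sum]
  refine I.sum_mem fun v hv => ?_
  simpa [C_mul_monomial] using I.mul_mem_left (C (f.coeff v)) (h v hv)

theorem monomial_mem_pow_span_X_image {s : Set σ} {g : σ →₀ ℕ}
    (hg : g ∈ Finsupp.supported ℕ ℕ s) :
    monomial g (1 : R) ∈ Ideal.span (X '' s) ^ g.degree := by
  rw [Finsupp.mem_supported] at hg
  rw [monomial_eq, C_1, one_mul, Finsupp.prod, Finsupp.degree_apply, ← Finset.prod_pow_eq_pow_sum]
  exact Ideal.prod_mem_prod fun i hi =>
    Ideal.pow_mem_pow (Ideal.subset_span (Set.mem_image_of_mem X (hg hi))) _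

theorem span_X_image_pow_le_span_monomial (s : Set σ) (m : ℕ) :
    Ideal.span (X '' s) ^ m ≤ Ideal.span
      ((monomial · (1 : R)) '' {g | g ∈ Finsupp.supported ℕ ℕ s ∧ g.degree = m}) := by
  induction m with
  | zero =>
    rw [pow_zero, Ideal.one_eq_top, top_le_iff, Ideal.eq_top_iff_one]
    exact Ideal.subset_span ⟨0, by simp, by simp⟩
  | succ m ih =>
    rw [pow_succ]
    refine (Ideal.mul_mono_left ih).trans ?_
    rw [Ideal.span_mul_span']
    refine Ideal.span_mono ?_
    rintro _ ⟨_, ⟨g, ⟨hgs, rfl⟩, rfl⟩, _, ⟨i, hi, rfl⟩, rfl⟩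
    refine ⟨g + Finsupp.single i 1, ⟨add_mem hgs (Finsupp.single_mem_supported ℕ 1 hi), ?_⟩, ?_⟩
    · simp
    · simp [monomial_add_single]

end MvPolynomial

open MvPolynomial Filter

section InfColon

variable {I I' J J' : Ideal (MvPolynomial (Fin n) k)} {f : MvPolynomial (Fin n) k}

theorem mem_infColon_iff :
    f ∈ infColon I J ↔ ∀ᶠ t in atTop, J ^ t ≤ Submodule.colon I {f} := by
  have hmono : Monotone fun t : ℕ => Submodule.colon I ((J ^ t : Ideal _) : Set _) :=
    fun s t hst => Submodule.colon_mono le_rfl (Ideal.pow_le_pow_right hst)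
  have hcolon : ∀ t, f ∈ Submodule.colon I ((J ^ t : Ideal _) : Set _) ↔
      J ^ t ≤ Submodule.colon I {f} := fun t => by
    simp only [Submodule.mem_colon, SetLike.le_def, smul_eq_mul,
      mul_comm f, SetLike.mem_coe, Set.mem_singleton_iff, forall_eq]
  rw [infColon, Submodule.mem_iSup_of_directed _ hmono.directed_le, eventually_atTop]
  exact ⟨fun ⟨t, ht⟩ => ⟨t, fun s hs => (hcolon s).1 (hmono hs ht)⟩,
    fun ⟨t, ht⟩ => ⟨t, (hcolon t).2 (ht t le_rfl)⟩⟩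

theorem le_infColon : I ≤ infColon I J := fun _ hf =>
  mem_infColon_iff.2 (Eventually.of_forall fun _ r _ =>
    Submodule.mem_colon_singleton.2 (I.mul_mem_left r hf))

theorem infColon_mono_left (h : I ≤ I') : infColon I J ≤ infColon I' J := fun _ hf =>
  mem_infColon_iff.2 ((mem_infColon_iff.1 hf).mono fun _ ht =>
    ht.trans (Submodule.colon_mono h le_rfl))

theorem infColon_anti_right (h : J ≤ J') : infColon I J' ≤ infColon I J := fun _ hf =>
  mem_infColon_iff.2 ((mem_infColon_iff.1 hf).mono fun t ht => (Ideal.pow_right_mono h t).trans ht)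

theorem exists_mul_pow_mem_of_mem_infColon (hf : f ∈ infColon I J) :
    ∃ s, ∀ a ∈ J, f * a ^ s ∈ I := by
  obtain ⟨s, hs⟩ := (mem_infColon_iff.1 hf).exists
  refine ⟨s, fun a ha => ?_⟩
  simpa [mul_comm] using Submodule.mem_colon_singleton.1 (hs (Ideal.pow_mem_pow ha s))

theorem mem_infColon_span_singleton_of_mul_pow_mem {a : MvPolynomial (Fin n) k} {b : ℕ}
    (h : f * a ^ b ∈ I) : f ∈ infColon I (Ideal.span {a}) := by
  refine mem_infColon_iff.2 ((eventually_ge_atTop b).mono fun t ht => ?_)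
  rw [Ideal.span_singleton_pow, Ideal.span_le, Set.singleton_subset_iff, SetLike.mem_coe,
    Submodule.mem_colon_singleton, smul_eq_mul, ← Nat.add_sub_cancel' ht, pow_add]
  convert I.mul_mem_right (a ^ (t - b)) h using 1
  ring

/-- Some power of `(T)` lies in `(a ^ m : a ∈ T)`. -/
theorem mem_infColon_of_forall_mul_pow_mem {T : Set (MvPolynomial (Fin n) k)} (hT : T.Finite)
    {m : ℕ} (h : ∀ a ∈ T, f * a ^ m ∈ infColon I (Ideal.span T)) :
    f ∈ infColon I (Ideal.span T) := by
  obtain ⟨N, hN⟩ : ∃ N, Ideal.span T ^ N ≤ Ideal.span ((· ^ m) '' T) :=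
    Ideal.exists_pow_le_of_le_radical_of_fg
      (Ideal.span_le.2 fun a ha => ⟨m, Ideal.subset_span ⟨a, ha, rfl⟩⟩)
      (Submodule.fg_span hT)
  obtain ⟨t, ht⟩ :=
    ((eventually_all_finite hT).2 fun a ha => mem_infColon_iff.1 (h a ha)).exists
  have hgen : Ideal.span ((· ^ m) '' T) ≤
      Submodule.colon (Submodule.colon I {f}) ((Ideal.span T ^ t : Ideal _) : Set _) := by
    refine Ideal.span_le.2 ?_
    rintro _ ⟨a, ha, rfl⟩
    refine Submodule.mem_colon.2 fun q hq => ?_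
    have := Submodule.mem_colon_singleton.1 (ht a ha hq)
    rw [Submodule.mem_colon_singleton, smul_eq_mul, smul_eq_mul] at *
    convert this using 1
    ring
  refine mem_infColon_iff.2 ((eventually_ge_atTop (N + t)).mono fun s hs => ?_)
  refine (Ideal.pow_le_pow_right hs).trans ?_
  rw [pow_add]
  exact Ideal.mul_le.2 fun r hr q hq => Submodule.mem_colon.1 (hgen (hN hr)) q hq

end InfColon

section Monomial

variable {I : Ideal (MvPolynomial (Fin n) k)}

theorem expDeg_eq_degree (u : Fin n →₀ ℕ) : expDeg u = u.degree := rfl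

theorem IsMonomialIdeal.monomial_mem_of_mem (hI : IsMonomialIdeal I) {f : MvPolynomial (Fin n) k}
    (hf : f ∈ I) {v : Fin n →₀ ℕ} (hv : v ∈ f.support) : monomial v (1 : k) ∈ I := by
  obtain ⟨A, rfl⟩ := hI
  obtain ⟨u, hu, huv⟩ := mem_ideal_span_monomial_image.1 hf v hv
  exact monomial_mem_of_le (Ideal.subset_span ⟨u, hu, rfl⟩) huv

theorem truncGE_le (e : ℕ) : truncGE I e ≤ I :=
  Ideal.span_le.2 fun _ ⟨_, hu, _, hf⟩ => hf ▸ hu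

theorem monomial_mem_truncGE_iff {e : ℕ} {v : Fin n →₀ ℕ} :
    monomial v (1 : k) ∈ truncGE I e ↔ monomial v (1 : k) ∈ I ∧ e ≤ v.degree := by
  have hgen : {f | ∃ u, monomial u (1 : k) ∈ I ∧ e ≤ expDeg u ∧ f = monomial u (1 : k)} =
      (monomial · (1 : k)) '' {u | monomial u (1 : k) ∈ I ∧ e ≤ u.degree} := by
    ext; simp [eq_comm, expDeg_eq_degree, and_assoc]
  classical
  rw [truncGE, hgen, mem_ideal_span_monomial_image, support_monomial, if_neg one_ne_zero]
  simp only [Finset.mem_singleton, forall_eq, Set.mem_ofPred_eq]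
  exact ⟨fun ⟨u, ⟨hu, he⟩, huv⟩ =>
    ⟨monomial_mem_of_le hu huv, he.trans (Finsupp.degree_mono huv)⟩, fun h => ⟨v, h, le_rfl⟩⟩

theorem isBorelType_iff : IsBorelType I ↔
    ∀ i, infColon I (Ideal.span (X '' Set.Iic i)) = infColon I (Ideal.span {X i}) := by
  have hgen : ∀ i : Fin n, {f : MvPolynomial (Fin n) k | ∃ j ≤ i, f = X j} = X '' Set.Iic i :=
    fun i => by ext; simp [eq_comm]
  simp only [IsBorelType, hgen]

end Monomial

section BorelType

variable {I : Ideal (MvPolynomial (Fin n) k)}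

theorem IsBorelType.monomial_filter_lt_mem_infColon (hB : IsBorelType I) {u : Fin n →₀ ℕ}
    (hu : monomial u (1 : k) ∈ I) (j : Fin n) :
    monomial (u.filter (· < j)) (1 : k) ∈ infColon I (Ideal.span (X '' Set.Iio j)) := by
  suffices key : ∀ h ∈ Finsupp.supported ℕ ℕ (Set.Ici j),
      ∀ w ∈ Finsupp.supported ℕ ℕ (Set.Iio j), monomial (w + h) (1 : k) ∈ I →
        monomial w (1 : k) ∈ infColon I (Ideal.span (X '' Set.Iio j)) by
    refine key _ (Finsupp.supported_mono (fun _ => not_lt.1)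
      (Finsupp.filter_mem_supported ℕ (¬ · < j) u)) _ (Finsupp.filter_mem_supported ℕ _ u) ?_
    rwa [Finsupp.filter_add_filter_not]
  intro h hh
  induction h using Finsupp.induction with
  | zero => exact fun w _ hw => le_infColon (by simpa using hw)
  | single_add a b h ha hb ih =>
    obtain ⟨haj, hh⟩ := (Finsupp.single_add_mem_supported_iff ha hb).1 hh
    intro w hw hwh
    have hsat : monomial (w + h) (1 : k) ∈ infColon I (Ideal.span (X '' Set.Iic a)) := by
      rw [isBorelType_iff.1 hB a]
      refine mem_infColon_span_singleton_of_mul_pow_mem (b := b) ?_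
      rwa [← monomial_add_single, add_right_comm, add_assoc]
    obtain ⟨s, hs⟩ := exists_mul_pow_mem_of_mem_infColon hsat
    refine mem_infColon_of_forall_mul_pow_mem (m := s) ((Set.finite_Iio j).image X) ?_
    rintro _ ⟨l, hl, rfl⟩
    rw [← monomial_add_single]
    refine ih hh _ (add_mem hw (Finsupp.single_mem_supported ℕ s hl)) ?_
    rw [add_right_comm, monomial_add_single]
    exact hs _ (Ideal.subset_span ⟨l, show l ≤ a from (Set.mem_Iio.1 hl).le.trans haj, rfl⟩)

end BorelType

section Stable

variable {L : Ideal (MvPolynomial (Fin n) k)}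

theorem IsStable.monomial_add_single_mem_of_le (hL : IsStable L) {y : Fin n →₀ ℕ}
    {a l : Fin n} {m : ℕ}
    (hy : y ∈ Finsupp.supported ℕ ℕ (Set.Iic a)) (hl : l ≤ a)
    (h : monomial (y + Finsupp.single a m) (1 : k) ∈ L) :
    monomial (y + Finsupp.single l m) (1 : k) ∈ L := by
  rcases hl.eq_or_lt with rfl | hla
  · exact h
  induction m generalizing y with
  | zero => simpa using h
  | succ m ih =>
    have hmax : ∀ l' ∈ (y + Finsupp.single a (m + 1)).support, l' ≤ a :=
      fun l' hl' => (Finsupp.mem_supported _ _).1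
        (add_mem hy (Finsupp.single_mem_supported ℕ _ (Set.mem_Iic.2 le_rfl))) hl'
    have hstep := hL _ h a (by simp) hmax l hla
    rw [Finsupp.single_add, ← add_assoc, add_tsub_cancel_right] at hstep
    have := ih (add_mem hy (Finsupp.single_mem_supported ℕ 1 hla.le)) (by rwa [add_right_comm])
    rwa [add_assoc, ← Finsupp.single_add, add_comm 1 m] at this

/-- Repeatedly moving the largest variable down to `x_c`. -/
theorem IsStable.monomial_add_single_degree_mem (hL : IsStable L) {c : Fin n}
    {w h : Fin n →₀ ℕ} (hw : w ∈ Finsupp.supported ℕ ℕ (Set.Iic c))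
    (hh : h ∈ Finsupp.supported ℕ ℕ (Set.Ici c)) (hwh : monomial (w + h) (1 : k) ∈ L) :
    monomial (w + Finsupp.single c h.degree) (1 : k) ∈ L := by
  induction h using Finsupp.induction_on_max generalizing w with
  | zero => simpa using hwh
  | single_add a b h hlt hb ih =>
    obtain ⟨hca, hh⟩ :=
      (Finsupp.single_add_mem_supported_iff (fun ha => lt_irrefl a (hlt a ha)) hb).1 hh
    have hy : w + h ∈ Finsupp.supported ℕ ℕ (Set.Iic a) :=
      add_mem (Finsupp.supported_mono (Set.Iic_subset_Iic.2 hca) hw)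
        ((Finsupp.mem_supported _ _).2 fun l hl => (hlt l hl).le)
    have hmove :=
      hL.monomial_add_single_mem_of_le hy hca (by rwa [add_comm _ h, ← add_assoc] at hwh)
    rw [map_add, Finsupp.degree_single, Finsupp.single_add, ← add_assoc]
    exact ih (add_mem hw (Finsupp.single_mem_supported ℕ b (Set.mem_Iic.2 le_rfl))) hh
      (by rwa [add_right_comm])

theorem IsStable.monomial_add_mem_of_single_degree (hL : IsStable L) {c : Fin n}
    {w g : Fin n →₀ ℕ} (hw : w ∈ Finsupp.supported ℕ ℕ (Set.Iic c))
    (hg : g ∈ Finsupp.supported ℕ ℕ (Set.Iic c))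
    (h : monomial (w + Finsupp.single c g.degree) (1 : k) ∈ L) :
    monomial (w + g) (1 : k) ∈ L := by
  induction g using Finsupp.induction generalizing w with
  | zero => simpa using h
  | single_add l b g hl hb ih =>
    obtain ⟨hlc, hg⟩ := (Finsupp.single_add_mem_supported_iff hl hb).1 hg
    rw [map_add, Finsupp.degree_single, Finsupp.single_add, add_comm (Finsupp.single c b),
      ← add_assoc] at h
    have hmove := hL.monomial_add_single_mem_of_le
      (add_mem hw (Finsupp.single_mem_supported ℕ _ (Set.mem_Iic.2 le_rfl))) hlc h
    rw [← add_assoc]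
    exact ih (add_mem hw (Finsupp.single_mem_supported ℕ b hlc)) hg (by rwa [add_right_comm])

theorem IsStable.monomial_filter_lt_mem_infColon (hL : IsStable L) {z : Fin n →₀ ℕ}
    (hz : monomial z (1 : k) ∈ L) (c : Fin n) :
    monomial (z.filter (· < c)) (1 : k) ∈ infColon L (Ideal.span (X '' Set.Iic c)) := by
  have hw : z.filter (· < c) ∈ Finsupp.supported ℕ ℕ (Set.Iic c) :=
    Finsupp.supported_mono Set.Iio_subset_Iic_self (Finsupp.filter_mem_supported ℕ _ z)
  have hpush := hL.monomial_add_single_degree_mem hw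
    (Finsupp.supported_mono (fun _ => not_lt.1) (Finsupp.filter_mem_supported ℕ (¬ · < c) z))
    (by rwa [Finsupp.filter_add_filter_not])
  refine mem_infColon_iff.2 ((eventually_ge_atTop (z.filter (¬ · < c)).degree).mono fun t ht =>
    (Ideal.pow_le_pow_right ht).trans
      ((span_X_image_pow_le_span_monomial _ _).trans (Ideal.span_le.2 ?_)))
  rintro _ ⟨g, ⟨hg, hgdeg⟩, rfl⟩
  rw [SetLike.mem_coe, Submodule.mem_colon_singleton, smul_eq_mul, monomial_mul, one_mul,
    add_comm]
  exact hL.monomial_add_mem_of_single_degree hw hg (hgdeg ▸ hpush)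

end Stable

section Truncation

variable {I : Ideal (MvPolynomial (Fin n) k)}

theorem monomial_add_single_mem_of_le_add_single {u w : Fin n →₀ ℕ} {i j : Fin n} {S : ℕ}
    (hu : monomial u (1 : k) ∈ I) (huw : u ≤ w + Finsupp.single j 1)
    (hw : w ∈ Finsupp.supported ℕ ℕ (Set.Iic j)) (hij : i < j)
    (hdeg : S + u.degree ≤ w.degree + 1)
    (hsat : Ideal.span (X '' Set.Iio j) ^ S ≤
      Submodule.colon I {monomial (u.filter (· < j)) (1 : k)}) :
    monomial (w + Finsupp.single i 1) (1 : k) ∈ I := by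
  have hoff : ∀ l ≠ j, u l ≤ w l := fun l hl => Finsupp.apply_le_of_le_add_single huw hl
  have huj : u j ≤ w j + 1 := by simpa using huw j
  rcases huj.lt_or_eq with hlt | heq
  · refine monomial_mem_of_le hu fun l => le_add_right ?_
    rcases eq_or_ne l j with rfl | hlj
    exacts [Nat.lt_succ_iff.1 hlt, hoff l hlj]
  set a := u.filter (· < j)
  set b := (w + Finsupp.single i 1).filter (· < j)
  have hab : a ≤ b := fun l => by
    by_cases hl : l < j
    · simpa [a, b, hl] using (hoff l hl.ne).trans le_self_add
    · simp [a, hl]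
  have hb : b.degree = (w.filter (· < j)).degree + 1 := by
    simp [b, Finsupp.filter_add, hij]
  have hw' := Finsupp.degree_filter_lt_add_apply hw
  have hu' : a.degree + u j = u.degree := Finsupp.degree_filter_lt_add_apply
    (Finsupp.mem_supported_of_le huw
      (add_mem hw (Finsupp.single_mem_supported ℕ 1 (Set.mem_Iic.2 le_rfl))))
  have hba : (b - a).degree + a.degree = b.degree := by
    rw [← map_add, tsub_add_cancel_of_le hab]
  have hsupp : b - a ∈ Finsupp.supported ℕ ℕ (Set.Iio j) :=
    Finsupp.mem_supported_of_le tsub_le_self (Finsupp.filter_mem_supported ℕ _ _)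
  have hmem := hsat (Ideal.pow_le_pow_right (by omega) (monomial_mem_pow_span_X_image hsupp))
  rw [Submodule.mem_colon_singleton, smul_eq_mul, monomial_mul, one_mul,
    tsub_add_cancel_of_le hab] at hmem
  exact monomial_mem_of_le hmem (Finsupp.filter_le _ _)

theorem IsBorelType.eventually_isStable_truncGE (hB : IsBorelType I) :
    ∀ᶠ e in atTop, IsStable (truncGE I e) := by
  obtain ⟨A, hAI, hA⟩ :=
    WellQuasiOrderedLE.exists_finset_forall_exists_le fun u => monomial u (1 : k) ∈ I
  obtain ⟨S, hS⟩ := ((eventually_all_finset A).2 fun u hu => eventually_all.2 fun j =>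
    mem_infColon_iff.1 (hB.monomial_filter_lt_mem_infColon (hAI u hu) j)).exists
  filter_upwards [eventually_ge_atTop (S + A.sup Finsupp.degree)] with e he v hv j hj hjmax i hij
  rw [monomial_mem_truncGE_iff] at hv ⊢
  obtain ⟨w, rfl⟩ : ∃ w, v = w + Finsupp.single j 1 :=
    ⟨v - Finsupp.single j 1, (tsub_add_cancel_of_le (Finsupp.single_le_iff.2
      (Nat.one_le_iff_ne_zero.2 (Finsupp.mem_support_iff.1 hj)))).symm⟩
  obtain ⟨u, huA, huv⟩ := hA _ hv.1
  have hw : w ∈ Finsupp.supported ℕ ℕ (Set.Iic j) :=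
    Finsupp.mem_supported_of_le le_self_add ((Finsupp.mem_supported _ _).2 hjmax)
  have hdeg := hv.2
  rw [map_add, Finsupp.degree_single] at hdeg ⊢
  rw [add_tsub_cancel_right]
  refine ⟨monomial_add_single_mem_of_le_add_single (hAI u huA) huv hw hij ?_ (hS u huA j), ?_⟩
  · have := Finset.le_sup (f := Finsupp.degree) huA
    omega
  · simpa using hdeg

theorem IsMonomialIdeal.isBorelType_of_isStable_truncGE (hI : IsMonomialIdeal I) {e : ℕ}
    (hL : IsStable (truncGE I e)) : IsBorelType I := by
  refine isBorelType_iff.2 fun i =>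
    le_antisymm (infColon_anti_right (Ideal.span_mono (by simp))) fun f hf => ?_
  obtain ⟨t, ht⟩ := exists_mul_pow_mem_of_mem_infColon hf
  have hft := ht (X i) (Ideal.mem_span_singleton_self _)
  refine mem_of_forall_monomial_mem _ fun v hv => ?_
  have hvt : v + Finsupp.single i t ∈ (f * X i ^ t).support := by
    rwa [mem_support_iff, X_pow_eq_monomial, coeff_mul_monomial, mul_one, ← mem_support_iff]
  have hz : monomial (v + Finsupp.single i (t + e)) (1 : k) ∈ truncGE I e :=
    monomial_mem_truncGE_iff.2 ⟨monomial_mem_of_le (hI.monomial_mem_of_mem hft hvt)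
      (by gcongr; omega), by simp; omega⟩
  refine monomial_mem_of_le (infColon_mono_left (truncGE_le e)
    (hL.monomial_filter_lt_mem_infColon hz i)) ?_
  simpa [Finsupp.filter_add] using Finsupp.filter_le _ v

end Truncation

/-- A monomial ideal is of Borel type iff its truncations `I_{≥e}`
are stable for all sufficiently large `e`. -/
theorem borelType_iff_eventually_stable_truncation
    {k : Type} [Field k] {n : ℕ} (I : Ideal (MvPolynomial (Fin n) k))
    (hI : IsMonomialIdeal I) :
    IsBorelType I ↔ ∃ e₀ : ℕ, ∀ e : ℕ, e₀ ≤ e → IsStable (truncGE I e) :=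
  ⟨fun hB => eventually_atTop.1 hB.eventually_isStable_truncGE,
    fun ⟨e₀, he₀⟩ => hI.isBorelType_of_isStable_truncGE (he₀ e₀ le_rfl)⟩

end
end

section
/- If I is a monomial ideal of Borel type in S = k[x_1,...,x_n], then the sequence x_n, x_{n-1}, ..., x_1 is an almost regular sequence on S/I; that is, for each i, the multiplication map by x_i on S/(I + (x_n,...,x_{i+1})) has kernel of finite length (equivalently, the kernel vanishes in all sufficiently large degrees). -/
open MvPolynomial DirectSum

noncomputable section




variable {k : Type} [Field k] {n : ℕ}

variable (M : Type) [AddCommGroup M] [Module (MvPolynomial (Fin n) k) M]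

variable (dg : ℤ → AddSubgroup M)

/-! Let `J = I + (x_l : l > i)` and `𝔪ᵢ = (x_1, …, x_i)`. Both ideals are monomial, so it
suffices to treat a monomial `x^u` with `x_i x^u ∈ J`; if some `x_l` with `l > i` divides `x^u`
there is nothing to show, and otherwise `x^u ∈ 𝔪ᵢ^{deg u}` and `x_i x^u ∈ I`. By Borel type and
Noetherianity, `I : x_i ⊆ I : x_i^∞ = I : 𝔪ᵢ^∞ = I : 𝔪ᵢ^t` for some `t`, and Artin–Rees gives
`𝔪ᵢ^D ∩ (I : x_i) ⊆ 𝔪ᵢ^t (I : x_i) ⊆ I` for `D` large. -/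

namespace Ideal

variable {R : Type*} [CommRing R] [IsNoetherianRing R]

theorem exists_iSup_colon_pow_eq (I 𝔪 : Ideal R) :
    ∃ t₀ : ℕ,
      ⨆ t : ℕ, I.colon ((𝔪 ^ t : Ideal R) : Set R) = I.colon ((𝔪 ^ t₀ : Ideal R) : Set R) :=
  ⟨_, WellFoundedGT.iSup_eq_monotonicSequenceLimit
    ⟨fun t => I.colon ((𝔪 ^ t : Ideal R) : Set R),
      fun _ _ h => Submodule.colon_mono le_rfl (Ideal.pow_le_pow_right h)⟩⟩

theorem exists_pow_inf_colon_le {I 𝔪 : Ideal R} {x : R}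
    (hx : I.colon {x} ≤ ⨆ t : ℕ, I.colon ((𝔪 ^ t : Ideal R) : Set R)) :
    ∃ D : ℕ, 𝔪 ^ D ⊓ I.colon {x} ≤ I := by
  obtain ⟨t₀, ht₀⟩ := exists_iSup_colon_pow_eq I 𝔪
  obtain ⟨c, hc⟩ := 𝔪.exists_pow_inf_eq_pow_smul (M := R) (I.colon {x})
  refine ⟨t₀ + c, ?_⟩
  have artinRees := hc (t₀ + c) le_add_self
  simp only [smul_eq_mul, mul_top, Nat.add_sub_cancel] at artinRees
  calc 𝔪 ^ (t₀ + c) ⊓ I.colon {x} = 𝔪 ^ t₀ * (𝔪 ^ c ⊓ I.colon {x}) := artinRees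
    _ ≤ 𝔪 ^ t₀ * I.colon {x} := mul_mono_right inf_le_right
    _ ≤ I := Ideal.mul_le.2 fun m hm r hr => by
      rw [mul_comm]
      exact Submodule.mem_colon.1 (ht₀ ▸ hx hr) m hm

end Ideal

namespace MvPolynomial

variable {σ R : Type*} [CommSemiring R]

theorem monomial_mem_span_X_image_pow_degree {s : Set σ} {u : σ →₀ ℕ} (hu : ↑u.support ⊆ s) :
    monomial u (1 : R) ∈ Ideal.span (X '' s) ^ u.degree := by
  rw [monomial_eq, C_1, one_mul, Finsupp.prod, Finsupp.degree_apply,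
    ← Finset.prod_pow_eq_pow_sum]
  exact Ideal.prod_mem_prod fun l hl =>
    Ideal.pow_mem_pow (Ideal.subset_span (Set.mem_image_of_mem X (hu hl))) _

theorem mem_ideal_span_monomial_image_iff_monomial_mem {f : MvPolynomial σ R}
    {A : Set (σ →₀ ℕ)} :
    f ∈ Ideal.span ((monomial · (1 : R)) '' A) ↔
      ∀ u ∈ f.support, monomial u (1 : R) ∈ Ideal.span ((monomial · (1 : R)) '' A) := by
  classical
  simp only [mem_ideal_span_monomial_image]
  refine forall₂_congr fun u hu => ⟨fun h w hw => ?_, fun h => h u ?_⟩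
  · rwa [Finset.mem_singleton.1 (support_monomial_subset hw)]
  · have := nontrivial_of_ne _ _ (mem_support_iff.1 hu)
    rw [support_monomial, if_neg one_ne_zero, Finset.mem_singleton]

theorem span_monomial_image_sup_span_X_image (A : Set (σ →₀ ℕ)) (s : Set σ) :
    Ideal.span ((monomial · (1 : R)) '' A) ⊔ Ideal.span (X '' s) =
      Ideal.span ((monomial · (1 : R)) '' (A ∪ (Finsupp.single · 1) '' s)) := by
  rw [Set.image_union, Ideal.span_union, Set.image_image]
  rfl

theorem monomial_mem_of_mem_sup_span_X_image {A : Set (σ →₀ ℕ)} {s : Set σ} {w : σ →₀ ℕ}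
    (hw : ∀ l ∈ s, w l = 0)
    (h : monomial w (1 : R) ∈ Ideal.span ((monomial · (1 : R)) '' A) ⊔ Ideal.span (X '' s)) :
    monomial w (1 : R) ∈ Ideal.span ((monomial · (1 : R)) '' A) := by
  classical
  rw [span_monomial_image_sup_span_X_image, mem_ideal_span_monomial_image] at h
  rw [mem_ideal_span_monomial_image]
  intro v hv
  obtain rfl := Finset.mem_singleton.1 (support_monomial_subset hv)
  obtain ⟨t, ht | ⟨l, hl, rfl⟩, htv⟩ := h v hv
  · exact ⟨t, ht, htv⟩
  · simpa [hw l hl] using Finsupp.single_le_iff.1 htv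

theorem monomial_mem_sup_span_X_Ioi_of_X_mul_mem [LinearOrder σ] {A : Set (σ →₀ ℕ)} {i : σ}
    {D : ℕ} {u : σ →₀ ℕ}
    (hD : Ideal.span (X '' Set.Iic i) ^ D ⊓
        (Ideal.span ((monomial · (1 : R)) '' A)).colon {X i} ≤
      Ideal.span ((monomial · (1 : R)) '' A))
    (hu : D ≤ u.degree)
    (h : X i * monomial u (1 : R) ∈
      Ideal.span ((monomial · (1 : R)) '' A) ⊔ Ideal.span (X '' Set.Ioi i)) :
    monomial u (1 : R) ∈
      Ideal.span ((monomial · (1 : R)) '' A) ⊔ Ideal.span (X '' Set.Ioi i) := by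
  by_cases hgt : ∃ l ∈ u.support, i < l
  · obtain ⟨l, hl, hil⟩ := hgt
    refine Ideal.mem_sup_right (mem_ideal_span_X_image.2 fun v hv => ?_)
    rw [Finset.mem_singleton.1 (support_monomial_subset hv)]
    exact ⟨l, hil, Finsupp.mem_support_iff.1 hl⟩
  push Not at hgt
  have hXu : monomial (Finsupp.single i 1 + u) (1 : R) ∈
      Ideal.span ((monomial · (1 : R)) '' A) := by
    refine monomial_mem_of_mem_sup_span_X_image (fun l (hil : i < l) => ?_)
      (by rwa [monomial_single_add, pow_one])
    have hul : u l = 0 := Finsupp.notMem_support_iff.1 fun hl => (hgt l hl).not_gt hil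
    simp [hil.ne, hul]
  refine Ideal.mem_sup_left (hD ⟨Ideal.pow_le_pow_right hu
    (monomial_mem_span_X_image_pow_degree fun l hl => hgt l hl), ?_⟩)
  rwa [SetLike.mem_coe, Submodule.mem_colon_singleton, smul_eq_mul, mul_comm, ← pow_one (X i),
    ← monomial_single_add]

end MvPolynomial

theorem IsBorelType.colon_X_le_iSup_colon_pow {I : Ideal (MvPolynomial (Fin n) k)}
    (hB : IsBorelType I) (i : Fin n) :
    I.colon {X i} ≤ ⨆ t : ℕ, I.colon
      ((Ideal.span (X '' Set.Iic i) ^ t : Ideal (MvPolynomial (Fin n) k)) : Set _) := by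
  have hIic : {f : MvPolynomial (Fin n) k | ∃ j ≤ i, f = X j} = X '' Set.Iic i := by
    ext; simp [eq_comm]
  calc I.colon {X i}
      = I.colon ((Ideal.span {X i} ^ 1 : Ideal (MvPolynomial (Fin n) k)) : Set _) := by
        rw [pow_one, Ideal.colon_span]
    _ ≤ infColon I (Ideal.span {X i}) := le_iSup_of_le 1 le_rfl
    _ = _ := by rw [← hB i, hIic]; rfl

/-- If `I` is of Borel type, then `x_n, …, x_1` is an almost regular
sequence on `S/I`: for each `i`, the kernel of multiplication by `x_i` on
`S/(I + (x_n, …, x_{i+1}))` vanishes in all sufficiently large degrees. -/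
theorem almostRegular_of_borelType
    {k : Type} [Field k] {n : ℕ} (I : Ideal (MvPolynomial (Fin n) k))
    (hI : IsMonomialIdeal I) (hB : IsBorelType I) (i : Fin n) :
    ∃ D : ℕ, ∀ j : ℕ, D ≤ j →
      ∀ f ∈ homogeneousSubmodule (Fin n) k j,
        X i * f ∈ I ⊔ Ideal.span {g | ∃ l : Fin n, i < l ∧ g = X l} →
        f ∈ I ⊔ Ideal.span {g | ∃ l : Fin n, i < l ∧ g = X l} := by
  obtain ⟨A, rfl⟩ := hI
  obtain ⟨D, hD⟩ := Ideal.exists_pow_inf_colon_le (hB.colon_X_le_iSup_colon_pow i)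
  have hIoi : {g : MvPolynomial (Fin n) k | ∃ l, i < l ∧ g = X l} = X '' Set.Ioi i := by
    ext; simp [eq_comm]
  refine ⟨D, fun j hj f hf hXf => ?_⟩
  rw [hIoi, span_monomial_image_sup_span_X_image, mem_ideal_span_monomial_image_iff_monomial_mem,
    ← span_monomial_image_sup_span_X_image] at hXf ⊢
  intro u hu
  have hdeg : u.degree = j := by
    by_contra h
    exact mem_support_iff.1 hu (((mem_homogeneousSubmodule j f).1 hf).coeff_eq_zero h)
  have hXu := hXf (Finsupp.single i 1 + u)
    (by rw [support_X_mul]; exact Finset.mem_map_of_mem _ hu)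
  rw [monomial_single_add, pow_one] at hXu
  exact monomial_mem_sup_span_X_Ioi_of_X_mul_mem hD (hj.trans_eq hdeg.symm) hXu

end
end

section
/- Let I be a monomial ideal of Borel type in S = k[x_1,...,x_n] with irredundant irreducible decomposition I = q_1 ∩ ... ∩ q_r. Then the satiety of I equals the maximum of the satieties of the q_i; that is, max{ j : (I^{sat}/I)_j ≠ 0 } = max over i of max{ j : (q_i^{sat}/q_i)_j ≠ 0 }, with the convention max ∅ = −∞. -/
open MvPolynomial DirectSum

noncomputable section




variable {k : Type} [Field k] {n : ℕ}

variable (M : Type) [AddCommGroup M] [Module (MvPolynomial (Fin n) k) M]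

variable (dg : ℤ → AddSubgroup M)

/-!
If some `b_i = 0`, the irreducible ideal `m^b` is saturated, since no generator involves `x_i`;
if all `b_i ≥ 1`, then `x^u ∉ m^b` exactly when `u ≤ b - 1`, so `x^{b-1}` spans the
socle of `S/m^b`. Hence a monomial of `I^{sat} \ I` lies outside some component `m^b`, necessarily
an `m`-primary one, and divides `x^{b-1}`. Conversely, for an `m`-primary component `m^b`,
irredundancy gives a monomial lying in all other components but not in `m^b`; it divides
`x^{b-1}`, which therefore lies in `(I : m) \ I`.
-/

lemma MvPolynomial.monomial_one_mem_of_le {σ R : Type*} [CommSemiring R]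
    {I : Ideal (MvPolynomial σ R)} {u v : σ →₀ ℕ} (huv : u ≤ v) (hu : monomial u (1 : R) ∈ I) :
    monomial v (1 : R) ∈ I := by
  have := I.mul_mem_left (monomial (v - u) 1) hu
  rwa [monomial_mul, one_mul, tsub_add_cancel_of_le huv] at this

lemma MvPolynomial.degree_eq_of_mem_homogeneousSubmodule {σ R : Type*} [CommSemiring R]
    {j : ℕ} {f : MvPolynomial σ R} (hf : f ∈ homogeneousSubmodule σ R j) {u : σ →₀ ℕ}
    (hu : u ∈ f.support) : u.degree = j := by
  rw [Finsupp.degree_apply, ((mem_homogeneousSubmodule j f).mp hf).degree_eq_sum_deg_support hu]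

lemma mem_satur_of_forall_mul_X_mem {I : Ideal (MvPolynomial (Fin n) k)}
    {f : MvPolynomial (Fin n) k} (h : ∀ i, f * X i ∈ I) : f ∈ satur I := by
  refine Submodule.mem_iSup_of_mem 1 ?_
  rw [pow_one, maxIdeal, Ideal.colon_span, Submodule.mem_colon]
  rintro _ ⟨i, rfl⟩
  simpa [mul_comm] using h i

lemma exists_mul_X_pow_mem_of_mem_satur {I : Ideal (MvPolynomial (Fin n) k)}
    {f : MvPolynomial (Fin n) k} (hf : f ∈ satur I) (i : Fin n) : ∃ t : ℕ, f * X i ^ t ∈ I := by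
  have hdir : Directed (· ≤ ·) fun t : ℕ =>
      I.colon ((maxIdeal k n ^ t : Ideal _) : Set (MvPolynomial (Fin n) k)) :=
    Monotone.directed_le fun a b hab =>
      Submodule.colon_mono le_rfl (SetLike.coe_subset_coe.mpr (Ideal.pow_le_pow_right hab))
  obtain ⟨t, ht⟩ := (Submodule.mem_iSup_of_directed _ hdir).mp hf
  refine ⟨t, ?_⟩
  simpa [mul_comm] using Submodule.mem_colon.mp ht _
    (Ideal.pow_mem_pow (Ideal.subset_span ⟨i, rfl⟩ : X i ∈ maxIdeal k n) t)

def socleExp (b : Fin n →₀ ℕ) : Fin n →₀ ℕ := b.mapRange (· - 1) (Nat.zero_sub 1)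

@[simp]
lemma socleExp_apply (b : Fin n →₀ ℕ) (i : Fin n) : socleExp b i = b i - 1 :=
  Finsupp.mapRange_apply

lemma irredPow_eq_span_monomial (b : Fin n →₀ ℕ) :
    irredPow k b = Ideal.span ((fun u => monomial u (1 : k)) ''
      {u | ∃ i, 1 ≤ b i ∧ u = Finsupp.single i (b i)}) := by
  rw [irredPow]
  congr 1
  ext f
  constructor
  · rintro ⟨i, hi, rfl⟩
    exact ⟨_, ⟨i, hi, rfl⟩, X_pow_eq_monomial.symm⟩
  · rintro ⟨_, ⟨i, hi, rfl⟩, rfl⟩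
    exact ⟨i, hi, X_pow_eq_monomial.symm⟩

lemma mem_irredPow_iff_exponents {b : Fin n →₀ ℕ} {f : MvPolynomial (Fin n) k} :
    f ∈ irredPow k b ↔ ∀ u ∈ f.support, ∃ i, 1 ≤ b i ∧ b i ≤ u i := by
  rw [irredPow_eq_span_monomial, mem_ideal_span_monomial_image]
  refine forall₂_congr fun u _ => ⟨?_, ?_⟩
  · rintro ⟨_, ⟨i, hi, rfl⟩, hle⟩
    exact ⟨i, hi, Finsupp.single_le_iff.mp hle⟩
  · rintro ⟨i, hi, hle⟩
    exact ⟨_, ⟨i, hi, rfl⟩, Finsupp.single_le_iff.mpr hle⟩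

lemma monomial_mem_irredPow_iff {b u : Fin n →₀ ℕ} :
    monomial u (1 : k) ∈ irredPow k b ↔ ∃ i, 1 ≤ b i ∧ b i ≤ u i := by
  classical
  simp [mem_irredPow_iff_exponents, support_monomial]

lemma mem_irredPow_iff {b : Fin n →₀ ℕ} {f : MvPolynomial (Fin n) k} :
    f ∈ irredPow k b ↔ ∀ u ∈ f.support, monomial u (1 : k) ∈ irredPow k b := by
  simp only [mem_irredPow_iff_exponents (f := f), monomial_mem_irredPow_iff]

lemma irredPow_ne_top (b : Fin n →₀ ℕ) : irredPow k b ≠ ⊤ := by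
  rw [Ideal.ne_top_iff_one, ← C_1, ← monomial_zero', monomial_mem_irredPow_iff]
  rintro ⟨i, hi, hle⟩
  simp only [Finsupp.coe_zero, Pi.zero_apply] at hle
  omega

lemma monomial_mem_irredPow_iff_not_le_socleExp {b u : Fin n →₀ ℕ} (hb : ∀ i, 1 ≤ b i) :
    monomial u (1 : k) ∈ irredPow k b ↔ ¬ u ≤ socleExp b := by
  simp only [monomial_mem_irredPow_iff, Finsupp.le_def, socleExp_apply, not_forall, not_le]
  refine exists_congr fun i => ?_
  have := hb i
  omega

lemma monomial_socleExp_notMem_irredPow {b : Fin n →₀ ℕ} (hb : ∀ i, 1 ≤ b i) :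
    monomial (socleExp b) (1 : k) ∉ irredPow k b := by
  rw [monomial_mem_irredPow_iff_not_le_socleExp hb, not_not]

lemma mem_irredPow_of_mul_X_pow_mem {b : Fin n →₀ ℕ} {i : Fin n} (hi : b i = 0)
    {f : MvPolynomial (Fin n) k} {t : ℕ} (h : f * X i ^ t ∈ irredPow k b) : f ∈ irredPow k b := by
  rw [mem_irredPow_iff_exponents] at h ⊢
  intro u hu
  have hcoeff : coeff (u + Finsupp.single i t) (f * X i ^ t) = coeff u f := by
    rw [X_pow_eq_monomial, coeff_mul_monomial, mul_one]
  obtain ⟨l, hl, hle⟩ := h _ (mem_support_iff.mpr (hcoeff ▸ mem_support_iff.mp hu))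
  have hli : i ≠ l := by rintro rfl; omega
  exact ⟨l, hl, by simpa [Finsupp.single_apply, hli] using hle⟩

section Decompositions

variable {B : Finset (Fin n →₀ ℕ)}

lemma mem_iInf_irredPow_iff {f : MvPolynomial (Fin n) k} :
    f ∈ ⨅ c ∈ B, irredPow k c ↔ ∀ u ∈ f.support, ∀ c ∈ B, monomial u (1 : k) ∈ irredPow k c := by
  simp only [Submodule.mem_iInf, mem_irredPow_iff (f := f)]
  exact forall₂_comm

lemma mem_irredPow_of_mem_iInf {b : Fin n →₀ ℕ} (hb : b ∈ B) {f : MvPolynomial (Fin n) k}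
    (hf : f ∈ ⨅ c ∈ B, irredPow k c) : f ∈ irredPow k b :=
  (iInf₂_le b hb : (⨅ c ∈ B, irredPow k c) ≤ _) hf

lemma exists_le_socleExp_of_mem_satur_of_notMem {f : MvPolynomial (Fin n) k}
    (hs : f ∈ satur (⨅ c ∈ B, irredPow k c)) (hf : f ∉ ⨅ c ∈ B, irredPow k c) :
    ∃ c ∈ B, (∀ i, 1 ≤ c i) ∧ ∃ u ∈ f.support, u ≤ socleExp c := by
  rw [mem_iInf_irredPow_iff] at hf
  push Not at hf
  obtain ⟨u, hu, c, hc, hnot⟩ := hf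
  have hprimary : ∀ i, 1 ≤ c i := by
    intro i
    by_contra h0
    obtain ⟨t, ht⟩ := exists_mul_X_pow_mem_of_mem_satur hs i
    have hfc : f ∈ irredPow k c :=
      mem_irredPow_of_mul_X_pow_mem (by omega) (mem_irredPow_of_mem_iInf hc ht)
    exact hnot (mem_irredPow_iff.mp hfc u hu)
  rw [monomial_mem_irredPow_iff_not_le_socleExp hprimary, not_not] at hnot
  exact ⟨c, hc, hprimary, u, hu, hnot⟩

lemma exists_monomial_mem_iInf_erase_notMem {b : Fin n →₀ ℕ} (hb : b ∈ B)
    (hirr : (⨅ c ∈ B.erase b, irredPow k c) ≠ ⨅ c ∈ B, irredPow k c) :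
    ∃ w, monomial w (1 : k) ∉ irredPow k b ∧
      ∀ c ∈ B.erase b, monomial w (1 : k) ∈ irredPow k c := by
  have hle : (⨅ c ∈ B, irredPow k c) ≤ ⨅ c ∈ B.erase b, irredPow k c :=
    biInf_mono fun c hc => Finset.mem_of_mem_erase hc
  obtain ⟨g, hg, hgB⟩ := SetLike.exists_of_lt (lt_of_le_of_ne hle hirr.symm)
  rw [mem_iInf_irredPow_iff] at hgB
  push Not at hgB
  obtain ⟨w, hw, c, hc, hwc⟩ := hgB
  have hgw := fun c hc => mem_iInf_irredPow_iff.mp hg w hw c hc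
  obtain rfl : c = b := by
    by_contra hcb
    exact hwc (hgw c (Finset.mem_erase.mpr ⟨hcb, hc⟩))
  exact ⟨w, hwc, hgw⟩

lemma monomial_socleExp_mem_satur {b : Fin n →₀ ℕ} (hb : b ∈ B) (hprimary : ∀ i, 1 ≤ b i)
    (hirr : (⨅ c ∈ B.erase b, irredPow k c) ≠ ⨅ c ∈ B, irredPow k c) :
    monomial (socleExp b) (1 : k) ∈ satur (⨅ c ∈ B, irredPow k c) := by
  obtain ⟨w, hwb, hwc⟩ := exists_monomial_mem_iInf_erase_notMem hb hirr
  rw [monomial_mem_irredPow_iff_not_le_socleExp hprimary, not_not] at hwb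
  refine mem_satur_of_forall_mul_X_mem fun i => ?_
  simp only [Submodule.mem_iInf]
  intro c hc
  rcases eq_or_ne c b with rfl | hcb
  · rw [← pow_one (X i), X_pow_eq_monomial, monomial_mul, mul_one,
      monomial_mem_irredPow_iff_not_le_socleExp hprimary]
    intro hle
    have := hle i
    simp only [Finsupp.add_apply, socleExp_apply, Finsupp.single_eq_same] at this
    have := hprimary i
    omega
  · exact Ideal.mul_mem_right _ _
      (monomial_one_mem_of_le hwb (hwc c (Finset.mem_erase.mpr ⟨hcb, hc⟩)))

def irredSatiety (b : Fin n →₀ ℕ) : EReal :=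
  if ∀ i, 1 ≤ b i then (((socleExp b).degree : ℝ) : EReal) else ⊥

theorem satietyDeg_iInf_irredPow
    (hirr : ∀ b ∈ B, (⨅ c ∈ B.erase b, irredPow k c) ≠ ⨅ c ∈ B, irredPow k c) :
    satietyDeg (⨅ c ∈ B, irredPow k c) = ⨆ b ∈ B, irredSatiety b := by
  apply le_antisymm
  · refine sSup_le ?_
    rintro _ ⟨j, ⟨f, hfj, hs, hf⟩, rfl⟩
    obtain ⟨c, hc, hprimary, u, hu, hle⟩ := exists_le_socleExp_of_mem_satur_of_notMem hs hf
    have hj : j ≤ (socleExp c).degree :=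
      degree_eq_of_mem_homogeneousSubmodule hfj hu ▸ Finsupp.degree_mono hle
    refine le_iSup₂_of_le c hc ?_
    rw [irredSatiety, if_pos hprimary]
    exact_mod_cast hj
  · refine iSup₂_le fun b hb => ?_
    rw [irredSatiety]
    split_ifs with hprimary
    · exact le_sSup ⟨_, ⟨monomial (socleExp b) 1, isHomogeneous_monomial _ rfl,
        monomial_socleExp_mem_satur hb hprimary (hirr b hb),
        fun h => monomial_socleExp_notMem_irredPow hprimary (mem_irredPow_of_mem_iInf hb h)⟩, rfl⟩
    · exact bot_le

lemma satietyDeg_irredPow (b : Fin n →₀ ℕ) : satietyDeg (irredPow k b) = irredSatiety b := by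
  have h := satietyDeg_iInf_irredPow (k := k) (B := {b}) fun c hc => by
    rw [Finset.mem_singleton] at hc
    simpa [hc] using (irredPow_ne_top b).symm
  simpa using h

end Decompositions

theorem satiety_of_irreducible_decomposition_general
    {k : Type} [Field k] {n : ℕ} (I : Ideal (MvPolynomial (Fin n) k))
    (B : Finset (Fin n →₀ ℕ))
    (hdec : I = ⨅ b ∈ B, irredPow k b)
    (hirr : ∀ b ∈ B, (⨅ c ∈ B.erase b, irredPow k c) ≠ I) :
    satietyDeg I = sSup {x : EReal | ∃ b ∈ B, x = satietyDeg (irredPow k b)} := by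
  subst hdec
  have hset : {x : EReal | ∃ b ∈ B, x = satietyDeg (irredPow k b)} =
      irredSatiety '' (B : Set (Fin n →₀ ℕ)) := by
    ext x
    simp [satietyDeg_irredPow, eq_comm]
  rw [satietyDeg_iInf_irredPow hirr, hset, sSup_image]
  rfl

/-- The satiety of a Borel type monomial ideal equals the maximum of
the satieties of the components of its irredundant irreducible decomposition. -/
theorem satiety_of_irreducible_decomposition
    {k : Type} [Field k] {n : ℕ} (I : Ideal (MvPolynomial (Fin n) k))
    (hI : IsMonomialIdeal I) (hB : IsBorelType I)
    (B : Finset (Fin n →₀ ℕ))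
    (hdec : I = ⨅ b ∈ B, irredPow k b)
    (hirr : ∀ b ∈ B, (⨅ c ∈ B.erase b, irredPow k c) ≠ I) :
    satietyDeg I = sSup {x : EReal | ∃ b ∈ B, x = satietyDeg (irredPow k b)} :=
  satiety_of_irreducible_decomposition_general I B hdec hirr

end
end
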